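/- Let G be connected and contain at least one cycle (m ≥ n). Let n₁ be the number of vertices of G of degree 1 and let s₁ be the number of vertices of G not in the 2-core of G. Then the dimension of the kernel of B equals n₁, and the multiplicity of 0 as a root of the characteristic polynomial of B equals 2·s₁. -/

import Mathlib

/-!
A vector `x` on darts satisfies `(B x)(u → w) = (sum of x over the darts entering u) - x(w → u)`.
So `B x = 0` forces `x` to take a single value `S` on the darts entering `u`, with `S = deg u • S`:
`x` vanishes on darts entering vertices of degree `≠ 1` and is free on the one dart entering
each leaf.

For the multiplicity of `0`, let `d v` be the distance from `v` to the 2-core, which is nonempty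
because `G` has a cycle. A vertex `v` outside the 2-core has exactly one neighbour with
`d ≤ d v`: with two of them, every vertex of the 2-core together with the vertices reachable from
`v` by non-ascending steps would have two neighbours in that set, putting `v` in the 2-core.
Hence the potential `d (tail)² - d (head)²` strictly decreases along every non-backtracking step,
except between darts of the 2-core, so `B` is block triangular with zero diagonal blocks outside
the 2-core. The remaining block is the non-backtracking matrix of the 2-core, which has no leaves
and is therefore invertible by the kernel computation; the other darts are the two orientations
of the edges joining each vertex outside the 2-core to its parent, `2 s₁` darts in all.
-/

open Matrix Polynomial BigOperators

variable {V : Type*}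

/-- The non-backtracking matrix of a graph `G`, indexed by darts (oriented edges):
`B[(k→l),(i→j)] = 1` if `j = k` and `i ≠ l`, else `0`. -/
def nbMatrix [DecidableEq V] (G : SimpleGraph V) : Matrix G.Dart G.Dart ℂ :=
  fun e f => if f.snd = e.fst ∧ f.fst ≠ e.snd then 1 else 0

def InTwoCore (G : SimpleGraph V) (v : V) : Prop :=
  ∃ U : Set V, v ∈ U ∧ ∀ u ∈ U, 2 ≤ {w | w ∈ U ∧ G.Adj u w}.ncard

open Finset

namespace Matrix

variable {m R α : Type*} [Fintype m] [DecidableEq m] [CommRing R] [LinearOrder α]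

lemma charpoly_eq_charpoly_toSquareBlock_mul_X_pow {M : Matrix m m R} {b : m → α} {a : α}
    (h : ∀ i j, M i j ≠ 0 → b i < b j ∨ b i = a ∧ b j = a) :
    M.charpoly = (M.toSquareBlock b a).charpoly * X ^ #{i | b i ≠ a} := by
  have hM : M.BlockTriangular b := fun i j hji => by
    by_contra hne
    rcases h i j hne with hij | ⟨hi, hj⟩
    · exact lt_asymm hij hji
    · exact (hi ▸ hj ▸ hji).false
  have hzero : ∀ c ≠ a, M.toSquareBlock b c = 0 := fun c hc => by
    ext ⟨i, hi⟩ ⟨j, hj⟩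
    by_contra hne
    rcases h i j hne with hij | ⟨hi', _⟩
    · exact hij.ne (hi.trans hj.symm)
    · exact hc (hi.symm.trans hi')
  rw [hM.charpoly, ← prod_filter_mul_prod_filter_not _ (· = a)]
  congr 1
  · by_cases ha : a ∈ image b univ
    · rw [filter_eq', if_pos ha, prod_singleton]
    · have : IsEmpty {i // b i = a} := ⟨fun i => ha (i.2 ▸ mem_image_of_mem b (mem_univ _))⟩
      rw [filter_eq', if_neg ha, prod_empty, charpoly_isEmpty]
  · rw [prod_congr rfl fun c hc => by rw [hzero c (mem_filter.mp hc).2, charpoly_zero],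
      prod_pow_eq_pow_sum, card_eq_sum_card_fiberwise (f := b)
        (t := (image b univ).filter (· ≠ a)) fun i hi => by simpa using hi]
    refine congrArg _ (sum_congr rfl fun c hc => ?_)
    obtain ⟨-, hca⟩ := mem_filter.mp hc
    rw [Fintype.card_subtype, filter_filter]
    exact congrArg card (filter_congr fun i _ => (and_iff_right_of_imp fun h => h ▸ hca).symm)

lemma rootMultiplicity_zero_charpoly_eq_card [Nontrivial R] {M : Matrix m m R} {b : m → α} {a : α}
    (h : ∀ i j, M i j ≠ 0 → b i < b j ∨ b i = a ∧ b j = a) (hdet : (M.toSquareBlock b a).det ≠ 0) :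
    M.charpoly.rootMultiplicity 0 = #{i | b i ≠ a} := by
  have hroot : ¬ (M.toSquareBlock b a).charpoly.IsRoot 0 := fun h0 => hdet <| by
    rw [det_eq_sign_charpoly_coeff, coeff_zero_eq_eval_zero, h0.eq_zero, mul_zero]
  rw [charpoly_eq_charpoly_toSquareBlock_mul_X_pow h, ← sub_zero X, ← C_0,
    rootMultiplicity_mul_X_sub_C_pow (charpoly_monic _).ne_zero, rootMultiplicity_eq_zero hroot,
    zero_add]

end Matrix

namespace SimpleGraph

variable {G : SimpleGraph V}

lemma card_filter_dart_symm [Fintype V] [DecidableRel G.Adj] (p : G.Dart → Prop) [DecidablePred p] :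
    #{e : G.Dart | p e.symm} = #{e : G.Dart | p e} :=
  card_equiv Dart.symm_involutive.toPerm fun _ => by simp

section NonBacktracking

variable [DecidableEq V] [Fintype V] [DecidableRel G.Adj]

lemma nbMatrix_mulVec_apply (x : G.Dart → ℂ) (e : G.Dart) :
    (nbMatrix G *ᵥ x) e = ∑ d : G.Dart with d.fst = e.fst, x d.symm - x e.symm := by
  have hB : (nbMatrix G *ᵥ x) e = ∑ d : G.Dart with d.fst = e.fst ∧ d ≠ e, x d.symm := by
    rw [mulVec, dotProduct, ← Equiv.sum_comp Dart.symm_involutive.toPerm, sum_filter]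
    refine sum_congr rfl fun d _ => ?_
    have : d.fst = e.fst ∧ d.snd ≠ e.snd ↔ d.fst = e.fst ∧ d ≠ e :=
      and_congr_right fun h => not_congr ⟨fun h' => Dart.ext _ _ (Prod.ext h h'), (· ▸ rfl)⟩
    simp [nbMatrix, this]
  rw [hB, ← sum_erase_eq_sub (by simp)]
  congr 1
  ext d
  simp [and_comm]

lemma nbMatrix_mulVec_eq_zero_iff (x : G.Dart → ℂ) :
    nbMatrix G *ᵥ x = 0 ↔ ∀ f : G.Dart, G.degree f.snd ≠ 1 → x f = 0 := by
  simp only [funext_iff, Pi.zero_apply, nbMatrix_mulVec_apply, sub_eq_zero]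
  constructor
  · intro hx f hf
    set S := ∑ d : G.Dart with d.fst = f.snd, x d.symm
    have hout : ∀ d : G.Dart, d.fst = f.snd → x d.symm = S := fun d hd => by
      rw [← hx d, hd]
    have hS : S = G.degree f.snd • S := calc
      S = ∑ d : G.Dart with d.fst = f.snd, S :=
        sum_congr rfl fun d hd => hout d (mem_filter.mp hd).2
      _ = G.degree f.snd • S := by rw [sum_const, dart_fst_fiber_card_eq_degree]
    have hS0 : S = 0 := by
      rw [nsmul_eq_mul] at hS
      have : ((G.degree f.snd : ℂ) - 1) * S = 0 := by linear_combination -hS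
      exact (mul_eq_zero.mp this).resolve_left (sub_ne_zero.mpr (by exact_mod_cast hf))
    simpa [hS0] using hout f.symm rfl
  · intro hx e
    by_cases he : G.degree e.fst = 1
    · obtain ⟨d, hd⟩ := card_eq_one.mp ((G.dart_fst_fiber_card_eq_degree e.fst).trans he)
      have : e ∈ ({d} : Finset G.Dart) := by rw [← hd]; simp
      rw [hd, sum_singleton, mem_singleton.mp this]
    · rw [hx e.symm he, sum_eq_zero fun d hd =>
        hx d.symm ((show d.symm.snd = e.fst from (mem_filter.mp hd).2) ▸ he)]

lemma card_dart_fst_degree_eq_one :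
    #{d : G.Dart | G.degree d.fst = 1} = {v : V | G.degree v = 1}.ncard := by
  rw [card_eq_sum_card_fiberwise (f := fun d : G.Dart => d.fst) (t := {v | G.degree v = 1})
    (fun d hd => by simpa using hd), Set.ncard_eq_toFinset_card', Set.toFinset_ofPred,
    card_eq_sum_ones]
  refine sum_congr rfl fun v hv => ?_
  have hv : G.degree v = 1 := (mem_filter.mp hv).2
  rw [filter_filter, filter_congr fun d _ => and_iff_right_of_imp fun h => h ▸ hv,
    dart_fst_fiber_card_eq_degree, hv]

lemma finrank_ker_nbMatrix :
    Module.finrank ℂ (LinearMap.ker (nbMatrix G).mulVecLin)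
      = {v : V | G.degree v = 1}.ncard := by
  classical
  have hker : LinearMap.ker (nbMatrix G).mulVecLin
      = ⨅ f ∈ {f : G.Dart | G.degree f.snd ≠ 1}, LinearMap.ker (LinearMap.proj f) := by
    ext x
    simp [Submodule.mem_iInf, nbMatrix_mulVec_eq_zero_iff]
  rw [hker, (LinearMap.iInfKerProjEquiv ℂ (fun _ => ℂ) (I := {f : G.Dart | G.degree f.snd = 1})
    (J := {f : G.Dart | G.degree f.snd ≠ 1})
    (Set.disjoint_left.mpr fun f h h' => h' h) (fun f _ => em _)).finrank_eq,
    Module.finrank_pi, ← card_dart_fst_degree_eq_one, ← card_filter_dart_symm, Fintype.card_subtype]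
  rfl

lemma det_nbMatrix_ne_zero (h : ∀ v, G.degree v ≠ 1) : (nbMatrix G).det ≠ 0 := by
  rw [Ne, ← exists_mulVec_eq_zero_iff]
  rintro ⟨x, hx, hBx⟩
  exact hx (funext fun f => (nbMatrix_mulVec_eq_zero_iff x).mp hBx f (h _))

end NonBacktracking

@[simps]
def induceDartEquiv (s : Set V) : {e : G.Dart // e.fst ∈ s ∧ e.snd ∈ s} ≃ (G.induce s).Dart where
  toFun e := ⟨(⟨e.1.fst, e.2.1⟩, ⟨e.1.snd, e.2.2⟩), e.1.adj⟩
  invFun d := ⟨⟨(d.fst, d.snd), d.adj⟩, d.fst.2, d.snd.2⟩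

lemma nbMatrix_induce_submatrix [DecidableEq V] (s : Set V) :
    (nbMatrix (G.induce s)).submatrix (induceDartEquiv s) (induceDartEquiv s)
      = (nbMatrix G).submatrix Subtype.val Subtype.val := by
  ext e f
  simp [nbMatrix, Subtype.ext_iff]

lemma degree_induce [Fintype V] [DecidableEq V] [DecidableRel G.Adj] (s : Set V)
    [DecidablePred (· ∈ s)] (v : s) :
    (G.induce s).degree v = {w | w ∈ s ∧ G.Adj v w}.ncard := by
  rw [← card_neighborFinset_eq_degree, ← card_map, map_neighborFinset_induce,
    ← Set.ncard_coe_finset]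
  congr 1
  ext w
  simp [and_comm]

def twoCore (G : SimpleGraph V) : Set V := {v | InTwoCore G v}

lemma _root_.InTwoCore.two_le_ncard_adj [Finite V] {v : V} (hv : InTwoCore G v) :
    2 ≤ {w | w ∈ twoCore G ∧ G.Adj v w}.ncard := by
  obtain ⟨U, hvU, hU⟩ := hv
  exact (hU v hvU).trans <| Set.ncard_le_ncard fun w ⟨hwU, hvw⟩ => ⟨⟨U, hwU, hU⟩, hvw⟩

lemma Walk.IsCycle.inTwoCore [Finite V] {u v : V} {c : G.Walk u u} (hc : c.IsCycle)
    (hv : v ∈ c.support) : InTwoCore G v := by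
  refine ⟨{x | x ∈ c.support}, hv, fun x hx => ?_⟩
  rw [← hc.ncard_neighborSet_toSubgraph_eq_two hx]
  exact Set.ncard_le_ncard fun w hw =>
    ⟨(c.mem_verts_toSubgraph).mp hw.snd_mem, hw.adj_sub⟩

lemma Connected.twoCore_nonempty [Fintype V] [DecidableRel G.Adj] (hG : G.Connected)
    (hm : Fintype.card V ≤ #G.edgeFinset) : G.twoCore.Nonempty := by
  have hcyc : ¬ G.IsAcyclic := fun hac => by
    have := (IsTree.mk hG hac).card_edgeFinset
    omega
  simp only [IsAcyclic, not_forall, not_not] at hcyc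
  obtain ⟨v, c, hc⟩ := hcyc
  exact ⟨v, hc.inTwoCore c.start_mem_support⟩

noncomputable def distToCore (G : SimpleGraph V) (v : V) : ℕ :=
  sInf ((G.dist v ·) '' G.twoCore)

lemma distToCore_le {c : V} (hc : InTwoCore G c) (v : V) : G.distToCore v ≤ G.dist v c :=
  Nat.sInf_le ⟨c, hc, rfl⟩

lemma exists_dist_eq_distToCore (hC : G.twoCore.Nonempty) (v : V) :
    ∃ c, InTwoCore G c ∧ G.dist v c = G.distToCore v :=
  Nat.sInf_mem (hC.image _)

lemma distToCore_eq_zero_iff (hG : G.Connected) (hC : G.twoCore.Nonempty) {v : V} :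
    G.distToCore v = 0 ↔ InTwoCore G v := by
  refine ⟨fun h => ?_, fun hv => by simpa using distToCore_le hv v⟩
  obtain ⟨c, hc, hvc⟩ := exists_dist_eq_distToCore hC v
  rwa [hG.dist_eq_zero_iff.mp (hvc.trans h)]

lemma distToCore_le_succ_of_adj (hG : G.Connected) (hC : G.twoCore.Nonempty) {v w : V}
    (h : G.Adj v w) : G.distToCore v ≤ G.distToCore w + 1 := by
  obtain ⟨c, hc, hwc⟩ := exists_dist_eq_distToCore hC w
  calc G.distToCore v ≤ G.dist v c := distToCore_le hc v
    _ ≤ G.dist v w + G.dist w c := hG.dist_triangle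
    _ = G.distToCore w + 1 := by rw [dist_eq_one_iff_adj.mpr h, hwc, add_comm]

lemma exists_adj_distToCore_add_one_eq (hG : G.Connected) (hC : G.twoCore.Nonempty) {v : V}
    (hv : ¬ InTwoCore G v) : ∃ w, G.Adj v w ∧ G.distToCore w + 1 = G.distToCore v := by
  obtain ⟨c, hc, hvc⟩ := exists_dist_eq_distToCore hC v
  obtain ⟨p, hp⟩ := (hG v c).exists_walk_length_eq_dist
  cases p with
  | nil => exact absurd hc hv
  | @cons _ w _ h q =>
    have hw : G.distToCore w ≤ q.length := (distToCore_le hc w).trans (dist_le q)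
    have := distToCore_le_succ_of_adj hG hC h
    exact ⟨w, h, by simp only [Walk.length_cons] at hp; omega⟩

lemma eq_of_adj_of_distToCore_le [Finite V] (hG : G.Connected) (hC : G.twoCore.Nonempty)
    {v w₁ w₂ : V} (hv : ¬ InTwoCore G v) (h₁ : G.Adj v w₁) (h₂ : G.Adj v w₂)
    (hd₁ : G.distToCore w₁ ≤ G.distToCore v) (hd₂ : G.distToCore w₂ ≤ G.distToCore v) :
    w₁ = w₂ := by
  by_contra hne
  let R (a b : V) : Prop := G.Adj a b ∧ G.distToCore b ≤ G.distToCore a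
  let U : Set V := G.twoCore ∪ {u | Relation.ReflTransGen R v u}
  refine hv ⟨U, Or.inr .refl, fun u hu => ?_⟩
  by_cases hu' : InTwoCore G u
  · exact hu'.two_le_ncard_adj.trans (Set.ncard_le_ncard fun w ⟨hw, huw⟩ => ⟨Or.inl hw, huw⟩)
  obtain hu | hu := hu
  · exact absurd hu hu'
  refine (Set.one_lt_ncard_iff).mpr ?_
  obtain rfl | ⟨a, hva, hau, hdau⟩ := hu.cases_tail
  · exact ⟨w₁, w₂, ⟨Or.inr (.single ⟨h₁, hd₁⟩), h₁⟩, ⟨Or.inr (.single ⟨h₂, hd₂⟩), h₂⟩, hne⟩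
  · obtain ⟨p, hup, hdp⟩ := exists_adj_distToCore_add_one_eq hG hC hu'
    refine ⟨a, p, ⟨Or.inr hva, hau.symm⟩, ⟨Or.inr (hu.tail ⟨hup, by omega⟩), hup⟩, ?_⟩
    rintro rfl
    omega

lemma inTwoCore_of_adj_of_distToCore_eq [Finite V] (hG : G.Connected) (hC : G.twoCore.Nonempty)
    {v w : V} (h : G.Adj v w) (hvw : G.distToCore v = G.distToCore w) : InTwoCore G v := by
  by_contra hv
  obtain ⟨p, hvp, hp⟩ := exists_adj_distToCore_add_one_eq hG hC hv
  obtain rfl := eq_of_adj_of_distToCore_le hG hC hv h hvp hvw.ge (by omega)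
  omega

noncomputable def dartPotential (G : SimpleGraph V) (e : G.Dart) : ℤ :=
  (G.distToCore e.fst : ℤ) ^ 2 - (G.distToCore e.snd : ℤ) ^ 2

lemma dartPotential_symm (e : G.Dart) : G.dartPotential e.symm = -G.dartPotential e := by
  simp only [dartPotential, Dart.symm_toProd, Prod.fst_swap, Prod.snd_swap]
  ring

lemma dartPotential_pos_iff (e : G.Dart) :
    0 < G.dartPotential e ↔ G.distToCore e.snd < G.distToCore e.fst := by
  rw [dartPotential, sub_pos, sq_lt_sq₀ (by positivity) (by positivity)]
  exact_mod_cast Iff.rfl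

lemma dartPotential_eq_zero_iff [Finite V] (hG : G.Connected) (hC : G.twoCore.Nonempty)
    (e : G.Dart) : G.dartPotential e = 0 ↔ InTwoCore G e.fst ∧ InTwoCore G e.snd := by
  have hsq : G.dartPotential e = 0 ↔ G.distToCore e.fst = G.distToCore e.snd := by
    rw [dartPotential, sub_eq_zero, sq_eq_sq₀ (by positivity) (by positivity)]
    exact_mod_cast Iff.rfl
  rw [hsq, ← distToCore_eq_zero_iff hG hC, ← distToCore_eq_zero_iff hG hC]
  refine ⟨fun h => ?_, fun h => h.1.trans h.2.symm⟩
  have h0 := (distToCore_eq_zero_iff hG hC).mpr (inTwoCore_of_adj_of_distToCore_eq hG hC e.adj h)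
  exact ⟨h0, h ▸ h0⟩

lemma dartPotential_lt_of_nbMatrix_ne_zero [Finite V] [DecidableEq V] (hG : G.Connected)
    (hC : G.twoCore.Nonempty) {e f : G.Dart} (hef : nbMatrix G e f ≠ 0) :
    G.dartPotential e < G.dartPotential f ∨ G.dartPotential e = 0 ∧ G.dartPotential f = 0 := by
  obtain ⟨hfe, hnb⟩ : f.snd = e.fst ∧ f.fst ≠ e.snd := by
    by_contra h
    exact hef (if_neg h)
  set u := e.fst
  have hx : G.Adj u f.fst := hfe ▸ f.adj.symm
  have hw : G.Adj u e.snd := e.adj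
  have hxu := distToCore_le_succ_of_adj hG hC hx.symm
  have hux := distToCore_le_succ_of_adj hG hC hx
  have hwu := distToCore_le_succ_of_adj hG hC hw.symm
  have huw := distToCore_le_succ_of_adj hG hC hw
  simp only [dartPotential, hfe]
  by_cases hu : InTwoCore G u
  · rw [(distToCore_eq_zero_iff hG hC).mpr hu]
    push_cast
    by_cases h0 : G.distToCore f.fst = 0 ∧ G.distToCore e.snd = 0
    · simp [h0]
    · left
      have : (0 : ℤ) < G.distToCore f.fst ∨ (0 : ℤ) < G.distToCore e.snd := by omega
      rcases this with h | h <;> nlinarith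
  · have hk : 0 < G.distToCore u := Nat.pos_of_ne_zero (mt (distToCore_eq_zero_iff hG hC).mp hu)
    have hhigh : G.distToCore u < G.distToCore f.fst ∨ G.distToCore u < G.distToCore e.snd := by
      by_contra! h
      exact hnb (eq_of_adj_of_distToCore_le hG hC hu hx hw h.1 h.2)
    left
    rcases hhigh with h | h <;> nlinarith

lemma card_dartPotential_pos [Fintype V] [DecidableRel G.Adj] (hG : G.Connected)
    (hC : G.twoCore.Nonempty) :
    #{e : G.Dart | 0 < G.dartPotential e} = {v | ¬ InTwoCore G v}.ncard := by
  classical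
  rw [Set.ncard_eq_toFinset_card']
  refine card_bij (fun e _ => e.fst) (fun e he => ?_) (fun e₁ he₁ e₂ he₂ h => ?_) fun v hv => ?_
  · simp only [mem_filter, mem_univ, true_and, dartPotential_pos_iff, Set.mem_toFinset,
      Set.mem_ofPred_eq] at he ⊢
    rw [← distToCore_eq_zero_iff hG hC]
    omega
  · simp only [mem_filter, mem_univ, true_and, dartPotential_pos_iff] at he₁ he₂
    have hv : ¬ InTwoCore G e₁.fst := by rw [← distToCore_eq_zero_iff hG hC]; omega
    have := eq_of_adj_of_distToCore_le hG hC hv e₁.adj (h ▸ e₂.adj) he₁.le (h ▸ he₂.le)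
    exact Dart.ext _ _ (Prod.ext h this)
  · obtain ⟨w, hvw, hw⟩ := exists_adj_distToCore_add_one_eq hG hC (Set.mem_toFinset.mp hv)
    exact ⟨⟨(v, w), hvw⟩, by simp [dartPotential_pos_iff]; omega, rfl⟩

lemma card_dartPotential_ne_zero [Fintype V] [DecidableRel G.Adj] (hG : G.Connected)
    (hC : G.twoCore.Nonempty) :
    #{e : G.Dart | G.dartPotential e ≠ 0} = 2 * {v | ¬ InTwoCore G v}.ncard := by
  classical
  have hneg : #{e : G.Dart | G.dartPotential e < 0} = #{e : G.Dart | 0 < G.dartPotential e} := by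
    simp_rw [← card_filter_dart_symm (0 < G.dartPotential ·), dartPotential_symm, neg_pos]
  rw [filter_congr fun e _ => ne_iff_lt_or_gt, filter_or, card_union_of_disjoint
    (disjoint_filter.mpr fun _ _ h h' => h.not_gt h'), hneg, card_dartPotential_pos hG hC]
  ring

lemma det_toSquareBlock_dartPotential_ne_zero [Fintype V] [DecidableEq V] [DecidableRel G.Adj]
    (hG : G.Connected) (hC : G.twoCore.Nonempty) :
    ((nbMatrix G).toSquareBlock G.dartPotential 0).det ≠ 0 := by
  classical
  let φ := (Equiv.subtypeEquivRight (dartPotential_eq_zero_iff hG hC)).trans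
    (induceDartEquiv G.twoCore)
  have hblock : (nbMatrix G).toSquareBlock G.dartPotential 0
      = (nbMatrix (G.induce G.twoCore)).submatrix φ φ := by
    rw [show ⇑φ = induceDartEquiv G.twoCore ∘ Equiv.subtypeEquivRight _ from rfl,
      ← submatrix_submatrix, nbMatrix_induce_submatrix]
    rfl
  rw [hblock, det_submatrix_equiv_self]
  refine det_nbMatrix_ne_zero fun v => ?_
  have := v.2.two_le_ncard_adj
  rw [degree_induce]
  omega

end SimpleGraph

theorem nbMatrix_kernel_dim_and_zero_multiplicity
    [DecidableEq V] [Fintype V] (G : SimpleGraph V) [DecidableRel G.Adj]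
    (hconn : G.Connected) (hm : Fintype.card V ≤ G.edgeFinset.card) :
    Module.finrank ℂ ↥(LinearMap.ker (nbMatrix G).mulVecLin)
      = {v : V | G.degree v = 1}.ncard ∧
    (nbMatrix G).charpoly.rootMultiplicity 0 = 2 * {v : V | ¬ InTwoCore G v}.ncard := by
  have hC := hconn.twoCore_nonempty hm
  refine ⟨G.finrank_ker_nbMatrix, ?_⟩
  rw [rootMultiplicity_zero_charpoly_eq_card (b := G.dartPotential) (a := 0)
    (fun _ _ => G.dartPotential_lt_of_nbMatrix_ne_zero hconn hC)
    (G.det_toSquareBlock_dartPotential_ne_zero hconn hC), G.card_dartPotential_ne_zero hconn hC]
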